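/- If a quantum state |ψ⟩ on qubits indexed by a finite set V admits a family of Pauli measurements {M_k}_{k=1}^N such that (i) for every vertex v and every non-identity Pauli σ, the number of k with (M_k)_v = σ is even, (ii) each M_k satisfies M_k |ψ⟩ = χ_k |ψ⟩ with χ_k ∈ {±1}, and (iii) ∏_k χ_k = −1, then no deterministic local hidden variable assignment h : V × {X,Y,Z} → {±1} reproduces all outcomes χ_k, i.e., there is no h with ∏_{v : (M_k)_v ≠ I} h(v, (M_k)_v) = χ_k for all k. -/

import Mathlib

open scoped Classical

inductive Pauli | I | X | Y | Z
deriving DecidableEq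

noncomputable def pauliMat : Pauli → Matrix (Fin 2) (Fin 2) ℂ
  | Pauli.I => 1
  | Pauli.X => !![0, 1; 1, 0]
  | Pauli.Y => !![0, -Complex.I; Complex.I, 0]
  | Pauli.Z => !![1, 0; 0, -1]

noncomputable def pauliProd {V : Type} [Fintype V] [DecidableEq V] (σ : V → Pauli) :
    Matrix (V → Fin 2) (V → Fin 2) ℂ :=
  fun f g => ∏ v, pauliMat (σ v) (f v) (g v)

noncomputable def graphGen {V : Type} [Fintype V] [DecidableEq V] (G : SimpleGraph V) (v : V) :
    Matrix (V → Fin 2) (V → Fin 2) ℂ :=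
  pauliProd (fun u => if u = v then Pauli.X else if G.Adj u v then Pauli.Z else Pauli.I)

noncomputable def graphState {V : Type} [Fintype V] [DecidableEq V] (G : SimpleGraph V) :
    (V → Fin 2) → ℂ :=
  fun f => (-1 : ℂ) ^ (∑ e ∈ G.edgeFinset,
      Sym2.lift ⟨fun u v => (f u : ℕ) * (f v : ℕ), fun u v => Nat.mul_comm _ _⟩ e) /
    (Real.sqrt (2 ^ Fintype.card V) : ℂ)

noncomputable def expVal {V : Type} [Fintype V] [DecidableEq V]
    (ψ : (V → Fin 2) → ℂ) (P : Matrix (V → Fin 2) (V → Fin 2) ℂ) : ℂ :=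
  ∑ f, ∑ g, (starRingEnd ℂ) (ψ f) * P f g * ψ g

/-!
Each hidden-variable value `h v σ = ±1` with `σ ≠ I` occurs, across all the predicted outcomes,
an even number of times, so the product of all predictions is `+1`; quantum mechanics
demands `∏ χ k = -1`.
-/

open Finset

theorem Finset.prod_comp_eq_one_of_even_card_filter {ι α M : Type*} [DecidableEq α]
    [CommMonoid M] (s : Finset ι) (f : α → M) (g : ι → α) (hsq : ∀ a, f a ^ 2 = 1)
    (heven : ∀ a, f a ≠ 1 → Even #{i ∈ s | g i = a}) :
    ∏ i ∈ s, f (g i) = 1 := by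
  rw [prod_comp]
  refine prod_eq_one fun a _ => ?_
  by_cases ha : f a = 1
  · rw [ha, one_pow]
  · obtain ⟨m, hm⟩ := (heven a ha).two_dvd
    rw [hm, pow_mul, hsq, one_pow]

def lhvPrediction {V : Type} [Fintype V] (h : V → Pauli → ℤ) (m : V → Pauli) : ℤ :=
  ∏ v, if m v = Pauli.I then 1 else h v (m v)

theorem prod_lhvPrediction_eq_one {V ι : Type} [Fintype V] [Fintype ι] (M : ι → V → Pauli)
    (h : V → Pauli → ℤ) (hpm : ∀ v σ, σ ≠ Pauli.I → h v σ = 1 ∨ h v σ = -1)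
    (heven : ∀ v σ, σ ≠ Pauli.I → Even #{k | M k v = σ}) :
    ∏ k, lhvPrediction h (M k) = 1 := by
  unfold lhvPrediction
  rw [prod_comm]
  refine prod_eq_one fun v _ => ?_
  refine prod_comp_eq_one_of_even_card_filter univ
    (fun σ => if σ = Pauli.I then 1 else h v σ) (fun k => M k v) (fun σ => ?_) (fun σ hσ => ?_)
  · split_ifs with hσ
    · exact one_pow 2
    · rcases hpm v σ hσ with hσ1 | hσ1 <;> simp [hσ1]
  · exact heven v σ fun hI => hσ (if_pos hI)

theorem stmt6_general {V : Type} [Fintype V] (N : ℕ)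
    (M : Fin N → V → Pauli) (χ : Fin N → ℤ)
    (heven : ∀ (v : V) (σ : Pauli), σ ≠ Pauli.I →
      Even (Finset.univ.filter (fun k => M k v = σ)).card)
    (hprod : (∏ k, χ k) = -1) :
    ¬ ∃ h : V → Pauli → ℤ,
      (∀ (v : V) (σ : Pauli), σ ≠ Pauli.I → h v σ = 1 ∨ h v σ = -1) ∧
      ∀ k, (∏ v, if M k v = Pauli.I then 1 else h v (M k v)) = χ k := by
  rintro ⟨h, hpm, hpredict⟩
  have hone := prod_lhvPrediction_eq_one M h hpm heven
  simp only [lhvPrediction, hpredict, hprod] at hone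
  exact absurd hone (by decide)

/-- Abstract GHZ-type all-versus-nothing argument: if the Pauli measurements
`M k` each stabilize `ψ` up to sign `χ k`, occur evenly at each vertex, and
`∏ χ k = -1`, then no deterministic local hidden variable assignment reproduces
all the outcomes `χ k`. -/
theorem stmt6 {V : Type} [Fintype V] [DecidableEq V] (N : ℕ)
    (ψ : (V → Fin 2) → ℂ) (hψ : ψ ≠ 0)
    (M : Fin N → V → Pauli) (χ : Fin N → ℤ)
    (hχ : ∀ k, χ k = 1 ∨ χ k = -1)
    (heven : ∀ (v : V) (σ : Pauli), σ ≠ Pauli.I →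
      Even (Finset.univ.filter (fun k => M k v = σ)).card)
    (heig : ∀ k, (pauliProd (M k)).mulVec ψ = (χ k : ℂ) • ψ)
    (hprod : (∏ k, χ k) = -1) :
    ¬ ∃ h : V → Pauli → ℤ,
      (∀ (v : V) (σ : Pauli), σ ≠ Pauli.I → h v σ = 1 ∨ h v σ = -1) ∧
      ∀ k, (∏ v, if M k v = Pauli.I then 1 else h v (M k v)) = χ k :=
  stmt6_general N M χ heven hprod
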